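/- arXiv:2411.10833 — 5 statements merged into one kernel-verified Lean document; each statement's English description precedes it below -/
import Mathlib

section
/- For s ∈ [t_j, t_{j+1}] with t_{j+1} - t_j = τ and β ∈ (0,1], the function s ↦ (s-t_j)(t_{j+1}-s)^β + (t_{j+1}-s)(s-t_j)^β is bounded above by τ^{1+β}/2^β. -/
open Real Set

/-- pointwise bound on the interpolation kernel over one cell. -/
theorem cell_kernel_bound (τ β tj : ℝ) (hτ : 0 < τ) (hβ : β ∈ Ioc (0:ℝ) 1) :
    ∀ s ∈ Icc tj (tj + τ),
      (s - tj) * (tj + τ - s) ^ β + (tj + τ - s) * (s - tj) ^ β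
        ≤ τ ^ (1 + β) / 2 ^ β := by
  intro s hs
  obtain ⟨hs1, hs2⟩ := hs
  set a := s - tj with ha_def
  set b := tj + τ - s with hb_def
  have ha : 0 ≤ a := by simp [ha_def]; linarith
  have hb : 0 ≤ b := by simp [hb_def]; linarith
  have hab : a + b = τ := by rw [ha_def, hb_def]; ring
  have hβ0 : 0 < β := hβ.1
  have hβ1 : β ≤ 1 := hβ.2
  have hconc := (Real.concaveOn_rpow hβ0.le hβ1).2 (mem_Ici.2 hb) (mem_Ici.2 ha)
    (show (0:ℝ) ≤ a / τ by positivity) (show (0:ℝ) ≤ b / τ by positivity)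
    (show a / τ + b / τ = 1 by field_simp; linarith)
  -- hconc : (a/τ) • b^β + (b/τ) • a^β ≤ ((a/τ) • b + (b/τ) • a)^β
  simp only [smul_eq_mul] at hconc
  have hkey : a / τ * b ^ β + b / τ * a ^ β ≤ (τ / 2) ^ β := by
    refine hconc.trans ?_
    apply Real.rpow_le_rpow (by positivity) _ hβ0.le
    have h4 : 4 * (a * b) ≤ τ ^ 2 := by nlinarith [sq_nonneg (a - b)]
    rw [div_mul_eq_mul_div, div_mul_eq_mul_div, ← add_div, div_le_div_iff₀ hτ (by norm_num)]
    nlinarith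
  have := mul_le_mul_of_nonneg_left hkey hτ.le
  calc a * b ^ β + b * a ^ β = τ * (a / τ * b ^ β + b / τ * a ^ β) := by
        field_simp
    _ ≤ τ * (τ / 2) ^ β := this
    _ = τ ^ (1 + β) / 2 ^ β := by
        rw [Real.div_rpow hτ.le (by norm_num), Real.rpow_add hτ, Real.rpow_one]
        ring
end

section
/- Let 0 < α < β ≤ 1 and y ∈ C^{0,β}[0,T]. Then for every grid point t_n = nτ ∈ (0,T], the L1 approximation satisfies |D^α y(t_n) − δ^α_τ y(t_n)| ≤ C·[y]_{C^{0,β}[0,t_n]}·τ^{β-α}, where C = (1-n^{-α})/(2^β Γ(1-α)) + α/(Γ(1-α)(β-α)(1+β-α)) + α·Γ(1+β)/Γ(2+β-α). -/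
open Real Set

/-- The piecewise linear interpolant of `y` on the uniform grid `t_j = j τ`. -/
noncomputable def linInterp (τ : ℝ) (y : ℝ → ℝ) (t : ℝ) : ℝ :=
  (t - (⌊t / τ⌋ : ℝ) * τ) / τ * y (((⌊t / τ⌋ : ℝ) + 1) * τ)
    + (((⌊t / τ⌋ : ℝ) + 1) * τ - t) / τ * y ((⌊t / τ⌋ : ℝ) * τ)

/-- The Caputo derivative of order `α` (in the non-local difference form). -/
noncomputable def caputo (α : ℝ) (y : ℝ → ℝ) (t : ℝ) : ℝ :=
  (1 / Real.Gamma (1 - α)) * (y t - y 0) / t ^ α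
    + (α / Real.Gamma (1 - α)) * ∫ s in (0:ℝ)..t, (y t - y s) / (t - s) ^ (1 + α)

/-!
Write `t = nτ`. The interpolant agrees with `y` at `0` and at `t`, so the truncation error is
`α / Γ(1-α) · ∫₀ᵗ (I_τ y - y)(t - v) v^(-1-α) dv`. On a cell the interpolation error is a convex
combination of two Hölder increments. Away from `t`, concavity of `u ↦ u^β` bounds it by
`H (τ/2)^β`, and integrating `v^(-1-α)` over `[τ, t]` gives the first term of the constant. On
the last cell the two increments are integrated exactly: they give the Beta integrals
`B(β-α, 2)` and `B(1-α, 1+β)`, the other two terms.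
-/

open MeasureTheory Filter Topology

lemma mul_rpow_add_mul_rpow_le {a b β : ℝ} (ha : 0 ≤ a) (hb : 0 ≤ b) (hβ0 : 0 < β)
    (hβ1 : β ≤ 1) : a * b ^ β + b * a ^ β ≤ (a + b) * ((a + b) / 2) ^ β := by
  rcases (add_nonneg ha hb).eq_or_lt with hab | hab
  · obtain rfl : a = 0 := by linarith
    obtain rfl : b = 0 := by linarith
    simp
  have hjensen := (Real.concaveOn_rpow hβ0.le hβ1).2 (mem_Ici.2 hb) (mem_Ici.2 ha)
    (div_nonneg ha hab.le) (div_nonneg hb hab.le) (by field_simp)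
  simp only [smul_eq_mul] at hjensen
  have hmean : a / (a + b) * b + b / (a + b) * a ≤ (a + b) / 2 := by
    rw [div_mul_eq_mul_div, div_mul_eq_mul_div, ← add_div, div_le_div_iff₀ hab two_pos]
    nlinarith [sq_nonneg (a - b)]
  calc a * b ^ β + b * a ^ β = (a + b) * (a / (a + b) * b ^ β + b / (a + b) * a ^ β) := by
        field_simp
    _ ≤ (a + b) * (a / (a + b) * b + b / (a + b) * a) ^ β := by gcongr
    _ ≤ (a + b) * ((a + b) / 2) ^ β := by gcongr

lemma integral_rpow_mul_rpow_sub {a b τ : ℝ} (ha : 0 < a) (hb : 0 < b) (hτ : 0 < τ) :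
    ∫ u in (0:ℝ)..τ, u ^ (a - 1) * (τ - u) ^ (b - 1)
      = τ ^ (a + b - 1) * (Gamma a * Gamma b / Gamma (a + b)) := by
  have h := Complex.betaIntegral_scaled a b hτ
  rw [Complex.betaIntegral_eq_Gamma_mul_div _ _ (by simpa) (by simpa)] at h
  apply Complex.ofReal_injective
  rw [← intervalIntegral.integral_ofReal]
  convert h using 1
  · refine intervalIntegral.integral_congr fun u hu => ?_
    rw [uIcc_of_le hτ.le] at hu
    push_cast
    rw [Complex.ofReal_cpow hu.1, Complex.ofReal_cpow (sub_nonneg.2 hu.2)]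
    push_cast
    ring_nf
  · rw [← Complex.ofReal_add]
    push_cast
    rw [Complex.ofReal_cpow hτ.le, ← Complex.Gamma_ofReal, ← Complex.Gamma_ofReal,
      ← Complex.Gamma_ofReal]
    push_cast
    ring_nf

-- A function that is not interval integrable has integral `0`.
lemma intervalIntegrable_rpow_mul_rpow_sub {a b τ : ℝ} (ha : 0 < a) (hb : 0 < b) (hτ : 0 < τ) :
    IntervalIntegrable (fun u => u ^ (a - 1) * (τ - u) ^ (b - 1)) volume 0 τ :=
  intervalIntegral.intervalIntegrable_of_integral_ne_zero <| by
    rw [integral_rpow_mul_rpow_sub ha hb hτ]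
    positivity

lemma intervalIntegrable_and_abs_integral_le {f g : ℝ → ℝ} {a b : ℝ} (hab : a ≤ b)
    (hf : AEStronglyMeasurable f (volume.restrict (Ioc a b)))
    (hg : IntervalIntegrable g volume a b) (hfg : ∀ x ∈ Ioc a b, |f x| ≤ g x) :
    IntervalIntegrable f volume a b ∧ |∫ x in a..b, f x| ≤ ∫ x in a..b, g x := by
  have hle : ∀ᵐ x ∂volume, x ∈ Ioc a b → ‖f x‖ ≤ g x := Eventually.of_forall hfg
  refine ⟨hg.mono_fun' (by rwa [uIoc_of_le hab]) ?_,
    intervalIntegral.norm_integral_le_of_norm_le hab hle hg⟩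
  rw [uIoc_of_le hab]
  exact (ae_restrict_iff' measurableSet_Ioc).2 hle

section linInterp

variable {τ : ℝ} (y : ℝ → ℝ)

lemma linInterp_intCast_mul (hτ : τ ≠ 0) (k : ℤ) : linInterp τ y (k * τ) = y (k * τ) := by
  simp [linInterp, hτ, add_mul]

lemma linInterp_of_mem_Ico (hτ : 0 < τ) {j : ℤ} {s : ℝ} (hs : s ∈ Ico (j * τ) ((j + 1) * τ)) :
    linInterp τ y s = (s - j * τ) / τ * y ((j + 1) * τ) + ((j + 1) * τ - s) / τ * y (j * τ) := by
  have hj : ⌊s / τ⌋ = j := by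
    rw [Int.floor_eq_iff, le_div_iff₀ hτ, div_lt_iff₀ hτ]
    exact hs
  simp only [linInterp, hj]

lemma measurable_linInterp : Measurable (linInterp τ y) := by
  have hfloor : Measurable fun s : ℝ => ⌊s / τ⌋ := (measurable_id.div_const τ).floor
  have hlift (f : ℤ → ℝ) : Measurable fun s : ℝ => f ⌊s / τ⌋ := measurable_from_top.comp hfloor
  have h0 : Measurable fun s : ℝ => y (⌊s / τ⌋ * τ) := hlift fun k => y (k * τ)
  have h1 : Measurable fun s : ℝ => y ((⌊s / τ⌋ + 1) * τ) := hlift fun k => y ((k + 1) * τ)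
  have hk : Measurable fun s : ℝ => (⌊s / τ⌋ : ℝ) := hlift fun k => (k : ℝ)
  exact (((measurable_id.sub (hk.mul_const τ)).div_const τ).mul h1).add
    ((((hk.add_const 1).mul_const τ).sub measurable_id).div_const τ |>.mul h0)

end linInterp

section Holder

variable {α β H τ : ℝ} {y : ℝ → ℝ} {S : Set ℝ}

lemma continuousOn_of_abs_sub_le_rpow (hβ : 0 < β)
    (hy : ∀ s ∈ S, ∀ u ∈ S, |y u - y s| ≤ H * |u - s| ^ β) : ContinuousOn y S := by
  intro s hs
  rw [ContinuousWithinAt, tendsto_iff_dist_tendsto_zero]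
  have hbound : Tendsto (fun u => H * |u - s| ^ β) (𝓝[S] s) (𝓝 0) := by
    have hcont : Continuous fun u => H * |u - s| ^ β := by fun_prop (disch := positivity)
    simpa [ContinuousWithinAt, Real.zero_rpow hβ.ne'] using
      hcont.continuousWithinAt (s := S) (x := s)
  refine squeeze_zero' (Eventually.of_forall fun _ => dist_nonneg) ?_ hbound
  filter_upwards [self_mem_nhdsWithin] with u hu
  exact (Real.dist_eq _ _).trans_le (hy s hs u hu)

lemma abs_linInterp_sub_le (hτ : 0 < τ) {j : ℤ} {s : ℝ} (hs : s ∈ Ico (j * τ) ((j + 1) * τ))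
    (hcell : Icc (j * τ) ((j + 1) * τ) ⊆ S)
    (hy : ∀ s ∈ S, ∀ u ∈ S, |y u - y s| ≤ H * |u - s| ^ β) :
    |linInterp τ y s - y s|
      ≤ H * ((s - j * τ) / τ * ((j + 1) * τ - s) ^ β
        + ((j + 1) * τ - s) / τ * (s - j * τ) ^ β) := by
  have hcell_le : j * τ ≤ (j + 1) * τ := hs.1.trans hs.2.le
  have hsS : s ∈ S := hcell (Ico_subset_Icc_self hs)
  have hright := hy s hsS _ (hcell (right_mem_Icc.2 hcell_le))
  have hleft := hy _ (hcell (left_mem_Icc.2 hcell_le)) s hsS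
  rw [abs_of_nonneg (sub_nonneg.2 hs.2.le)] at hright
  rw [abs_sub_comm (y s), abs_of_nonneg (sub_nonneg.2 hs.1)] at hleft
  set a := s - j * τ
  set b := (j + 1) * τ - s
  have ha : 0 ≤ a / τ := div_nonneg (sub_nonneg.2 hs.1) hτ.le
  have hb : 0 ≤ b / τ := div_nonneg (sub_nonneg.2 hs.2.le) hτ.le
  have hsplit : linInterp τ y s - y s
      = a / τ * (y ((j + 1) * τ) - y s) + b / τ * (y (j * τ) - y s) := by
    rw [linInterp_of_mem_Ico y hτ hs]
    field_simp
    ring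
  calc |linInterp τ y s - y s|
      ≤ a / τ * |y ((j + 1) * τ) - y s| + b / τ * |y (j * τ) - y s| := by
        rw [hsplit]
        refine (abs_add_le _ _).trans_eq ?_
        rw [abs_mul, abs_mul, abs_of_nonneg ha, abs_of_nonneg hb]
    _ ≤ a / τ * (H * b ^ β) + b / τ * (H * a ^ β) := by gcongr
    _ = H * (a / τ * b ^ β + b / τ * a ^ β) := by ring

lemma abs_linInterp_sub_le_half_rpow (hτ : 0 < τ) (hH : 0 ≤ H) (hβ0 : 0 < β) (hβ1 : β ≤ 1)
    {T s : ℝ} (hs : 0 ≤ s) (hsT : s + τ ≤ T)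
    (hy : ∀ s ∈ Icc 0 T, ∀ u ∈ Icc 0 T, |y u - y s| ≤ H * |u - s| ^ β) :
    |linInterp τ y s - y s| ≤ H * (τ / 2) ^ β := by
  set j := ⌊s / τ⌋
  have hjs : j * τ ≤ s := (le_div_iff₀ hτ).1 (Int.floor_le _)
  have hsj : s < (j + 1) * τ := (div_lt_iff₀ hτ).1 (Int.lt_floor_add_one _)
  have hj0 : (0:ℝ) ≤ j := by exact_mod_cast Int.floor_nonneg.2 (div_nonneg hs hτ.le)
  have hcell : Icc (j * τ) ((j + 1) * τ) ⊆ Icc 0 T :=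
    Icc_subset_Icc (by positivity) (by linarith)
  refine (abs_linInterp_sub_le hτ ⟨hjs, hsj⟩ hcell hy).trans (mul_le_mul_of_nonneg_left ?_ hH)
  have h := mul_rpow_add_mul_rpow_le (sub_nonneg.2 hjs) (sub_nonneg.2 hsj.le) hβ0 hβ1
  rw [show s - j * τ + ((j + 1) * τ - s) = τ by ring] at h
  rw [div_mul_eq_mul_div, div_mul_eq_mul_div, ← add_div, div_le_iff₀ hτ]
  linarith

lemma abs_linInterp_sub_le_lastCell (hτ : 0 < τ) (k : ℤ) {v : ℝ} (hv : v ∈ Ioc 0 τ)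
    (hcell : Icc ((k - 1) * τ) (k * τ) ⊆ S)
    (hy : ∀ s ∈ S, ∀ u ∈ S, |y u - y s| ≤ H * |u - s| ^ β) :
    |linInterp τ y (k * τ - v) - y (k * τ - v)|
      ≤ H * ((τ - v) / τ * v ^ β + v / τ * (τ - v) ^ β) := by
  have hj : ((k - 1 : ℤ) : ℝ) = k - 1 := by push_cast; ring
  have h := abs_linInterp_sub_le hτ (j := k - 1) (s := k * τ - v)
    (by rw [hj]; constructor <;> linarith [hv.1, hv.2]) (by rwa [hj, sub_add_cancel]) hy
  rwa [hj, sub_add_cancel, show k * τ - v - (k - 1) * τ = τ - v by ring, sub_sub_cancel] at h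

lemma aestronglyMeasurable_linInterp_error {I : Set ℝ} (α t : ℝ) (hy : ContinuousOn y S)
    (hI : MeasurableSet I) (hIS : MapsTo (t - ·) I S) :
    AEStronglyMeasurable (fun v => (linInterp τ y (t - v) - y (t - v)) / v ^ (1 + α))
      (volume.restrict I) := by
  have hlin : AEMeasurable (fun v => linInterp τ y (t - v)) (volume.restrict I) :=
    ((measurable_linInterp y).comp (measurable_const.sub measurable_id)).aemeasurable
  have hyt : AEMeasurable (fun v => y (t - v)) (volume.restrict I) :=
    (hy.comp (continuous_sub_left t).continuousOn hIS).aemeasurable hI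
  exact ((hlin.sub hyt).div (measurable_id.pow_const _).aemeasurable).aestronglyMeasurable

end Holder

section Integrals

variable {α β H τ : ℝ}

lemma abs_integral_le_of_abs_le_lastCell {F : ℝ → ℝ} (hα : 0 < α) (hαβ : α < β) (hβ : β ≤ 1)
    (hτ : 0 < τ) (hF : AEStronglyMeasurable F (volume.restrict (Ioc 0 τ)))
    (hFle : ∀ v ∈ Ioc 0 τ,
      |F v| ≤ H * ((τ - v) / τ * v ^ β + v / τ * (τ - v) ^ β) / v ^ (1 + α)) :
    IntervalIntegrable F volume 0 τ ∧ |∫ v in (0:ℝ)..τ, F v|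
      ≤ H * τ ^ (β - α) * (1 / ((β - α) * (1 + β - α))
        + Gamma (1 + β) * Gamma (1 - α) / Gamma (2 + β - α)) := by
  have hβα : 0 < β - α := sub_pos.2 hαβ
  have hint₁ := intervalIntegrable_rpow_mul_rpow_sub hβα two_pos hτ
  have hint₂ := intervalIntegrable_rpow_mul_rpow_sub (a := 1 - α) (b := 1 + β)
    (by linarith) (by linarith) hτ
  have hbound := intervalIntegrable_and_abs_integral_le hτ.le hF
    ((hint₁.add hint₂).const_mul (H / τ)) fun v hv => by
      refine (hFle v hv).trans_eq ?_
      rw [show (2:ℝ) - 1 = 1 by norm_num, show 1 + β - 1 = β by ring,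
        show β - α - 1 = β - (1 + α) by ring, show 1 - α - 1 = 1 - (1 + α) by ring,
        Real.rpow_sub hv.1, Real.rpow_sub hv.1, Real.rpow_one, Real.rpow_one]
      field_simp
  refine ⟨hbound.1, hbound.2.trans_eq ?_⟩
  rw [intervalIntegral.integral_const_mul, intervalIntegral.integral_add hint₁ hint₂,
    integral_rpow_mul_rpow_sub hβα two_pos hτ,
    integral_rpow_mul_rpow_sub (by linarith) (by linarith) hτ]
  have hΓ : Gamma (β - α + 2) = (1 + β - α) * (β - α) * Gamma (β - α) := by
    rw [show β - α + 2 = (β - α + 1) + 1 by ring, Real.Gamma_add_one (by linarith),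
      Real.Gamma_add_one hβα.ne']
    ring
  have hΓβα : Gamma (β - α) ≠ 0 := (Real.Gamma_pos_of_pos hβα).ne'
  have hβα₁ : 1 + β - α ≠ 0 := by linarith
  have hτpow : τ ^ (β - α + 2 - 1) = τ ^ (β - α) * τ := by
    rw [← Real.rpow_add_one hτ.ne']
    ring_nf
  rw [show 1 - α + (1 + β) = 2 + β - α by ring, show 2 + β - α - 1 = β - α + 2 - 1 by ring,
    hΓ, hτpow, Real.Gamma_two]
  field_simp

lemma abs_integral_le_of_abs_le_earlierCells {F : ℝ → ℝ} {c : ℝ} (hα : 0 < α) (hτ : 0 < τ)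
    (hc : 1 ≤ c) (hF : AEStronglyMeasurable F (volume.restrict (Ioc τ (c * τ))))
    (hFle : ∀ v ∈ Ioc τ (c * τ), |F v| ≤ H * (τ / 2) ^ β / v ^ (1 + α)) :
    IntervalIntegrable F volume τ (c * τ)
      ∧ |∫ v in τ..c * τ, F v| ≤ H * τ ^ (β - α) * ((1 - c ^ (-α)) / (2 ^ β * α)) := by
  have hτc : τ ≤ c * τ := le_mul_of_one_le_left hτ.le hc
  have h0 : (0:ℝ) ∉ uIcc τ (c * τ) := by
    rw [uIcc_of_le hτc]
    exact fun h => hτ.not_ge h.1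
  have hint := (intervalIntegral.intervalIntegrable_rpow (μ := volume) (r := -(1 + α))
    (Or.inr h0)).const_mul (H * (τ / 2) ^ β)
  have hbound := intervalIntegrable_and_abs_integral_le hτc hF hint fun v hv => by
    rw [Real.rpow_neg (hτ.trans hv.1).le, ← div_eq_mul_inv]
    exact hFle v hv
  refine ⟨hbound.1, hbound.2.trans_eq ?_⟩
  rw [intervalIntegral.integral_const_mul, integral_rpow (Or.inr ⟨by linarith, h0⟩),
    show -(1 + α) + 1 = -α by ring, Real.mul_rpow (by linarith) hτ.le,
    Real.div_rpow hτ.le zero_le_two, Real.rpow_sub hτ, Real.rpow_neg hτ.le]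
  have : (2:ℝ) ^ β ≠ 0 := by positivity
  field_simp
  ring

end Integrals

section Caputo

variable {α β H : ℝ} {y : ℝ → ℝ}

lemma caputo_sub_caputo_of_eq {z : ℝ → ℝ} {t : ℝ} (h0 : z 0 = y 0) (ht : z t = y t)
    (hy : IntervalIntegrable (fun v => (y t - y (t - v)) / v ^ (1 + α)) volume 0 t)
    (hzy : IntervalIntegrable (fun v => (z (t - v) - y (t - v)) / v ^ (1 + α)) volume 0 t) :
    caputo α y t - caputo α z t
      = α / Gamma (1 - α) * ∫ v in (0:ℝ)..t, (z (t - v) - y (t - v)) / v ^ (1 + α) := by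
  have hsubst (f : ℝ → ℝ) : ∫ s in (0:ℝ)..t, f s = ∫ v in (0:ℝ)..t, f (t - v) := by
    simp [intervalIntegral.integral_comp_sub_left]
  have hsplit : ∫ v in (0:ℝ)..t, (y t - z (t - v)) / v ^ (1 + α)
      = (∫ v in (0:ℝ)..t, (y t - y (t - v)) / v ^ (1 + α))
        - ∫ v in (0:ℝ)..t, (z (t - v) - y (t - v)) / v ^ (1 + α) := by
    rw [← intervalIntegral.integral_sub hy hzy]
    congr 1 with v
    ring
  simp only [caputo, h0, ht]
  rw [hsubst (fun s => (y t - y s) / (t - s) ^ (1 + α)),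
    hsubst (fun s => (y t - z s) / (t - s) ^ (1 + α))]
  simp only [sub_sub_cancel]
  rw [hsplit]
  ring

lemma intervalIntegrable_caputo_integrand (hαβ : α < β) (hβ0 : 0 < β) {t : ℝ} (ht : 0 ≤ t)
    (hy : ∀ s ∈ Icc 0 t, ∀ u ∈ Icc 0 t, |y u - y s| ≤ H * |u - s| ^ β) :
    IntervalIntegrable (fun v => (y t - y (t - v)) / v ^ (1 + α)) volume 0 t := by
  have hbound := (intervalIntegral.intervalIntegrable_rpow' (a := 0) (b := t)
    (show -1 < β - (1 + α) by linarith)).const_mul H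
  refine (intervalIntegrable_and_abs_integral_le ht ?_ hbound fun v hv => ?_).1
  · have hyt : AEMeasurable (fun v => y (t - v)) (volume.restrict (Ioc 0 t)) :=
      ((continuousOn_of_abs_sub_le_rpow hβ0 hy).comp (continuous_sub_left t).continuousOn
        fun v hv => ⟨sub_nonneg.2 hv.2, sub_le_self t hv.1.le⟩).aemeasurable measurableSet_Ioc
    exact ((aemeasurable_const.sub hyt).div
      (measurable_id.pow_const _).aemeasurable).aestronglyMeasurable
  · have h := hy (t - v) ⟨sub_nonneg.2 hv.2, sub_le_self t hv.1.le⟩ t ⟨ht, le_rfl⟩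
    rw [sub_sub_cancel, abs_of_pos hv.1] at h
    rw [abs_div, abs_of_pos (Real.rpow_pos_of_pos hv.1 _), Real.rpow_sub hv.1, ← mul_div_assoc]
    exact div_le_div_of_nonneg_right h (Real.rpow_pos_of_pos hv.1 _).le

end Caputo

lemma linInterp_error_integral_estimate {α β H τ : ℝ} {y : ℝ → ℝ} (hα : 0 < α) (hαβ : α < β)
    (hβ : β ≤ 1) (hτ : 0 < τ) (hH : 0 ≤ H) {n : ℕ} (hn : 1 ≤ n)
    (hy : ∀ s ∈ Icc 0 (n * τ), ∀ u ∈ Icc 0 (n * τ), |y u - y s| ≤ H * |u - s| ^ β) :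
    IntervalIntegrable (fun v => (linInterp τ y (n * τ - v) - y (n * τ - v)) / v ^ (1 + α))
        volume 0 (n * τ)
      ∧ |∫ v in (0:ℝ)..n * τ, (linInterp τ y (n * τ - v) - y (n * τ - v)) / v ^ (1 + α)|
        ≤ H * τ ^ (β - α) * ((1 - (n : ℝ) ^ (-α)) / (2 ^ β * α) + 1 / ((β - α) * (1 + β - α))
          + Gamma (1 + β) * Gamma (1 - α) / Gamma (2 + β - α)) := by
  have hβ0 : 0 < β := hα.trans hαβ
  have hn' : (1:ℝ) ≤ n := by exact_mod_cast hn
  have hnτ : τ ≤ n * τ := le_mul_of_one_le_left hτ.le hn'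
  have hmeas {a b : ℝ} (hab : Ioc a b ⊆ Ioc 0 (n * τ)) :=
    aestronglyMeasurable_linInterp_error (τ := τ) α (n * τ)
      (continuousOn_of_abs_sub_le_rpow hβ0 hy) measurableSet_Ioc
      fun v hv => ⟨sub_nonneg.2 (hab hv).2, sub_le_self _ (hab hv).1.le⟩
  have hdiv {v e B : ℝ} (hv : 0 < v) (he : |e| ≤ B) : |e / v ^ (1 + α)| ≤ B / v ^ (1 + α) := by
    rw [abs_div, abs_of_pos (Real.rpow_pos_of_pos hv _)]
    exact div_le_div_of_nonneg_right he (Real.rpow_pos_of_pos hv _).le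
  obtain ⟨hint₁, hle₁⟩ := abs_integral_le_of_abs_le_lastCell hα hαβ hβ hτ
    (hmeas (Ioc_subset_Ioc_right hnτ)) fun v hv => hdiv hv.1 <| by
      simpa using abs_linInterp_sub_le_lastCell hτ n hv
        (Icc_subset_Icc (by push_cast; nlinarith) le_rfl) hy
  obtain ⟨hint₂, hle₂⟩ := abs_integral_le_of_abs_le_earlierCells hα hτ hn'
    (hmeas (Ioc_subset_Ioc_left hτ.le)) fun v hv => hdiv (hτ.trans hv.1) <|
      abs_linInterp_sub_le_half_rpow hτ hH hβ0 hβ (sub_nonneg.2 hv.2) (by linarith [hv.1]) hy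
  refine ⟨hint₁.trans hint₂, ?_⟩
  rw [← intervalIntegral.integral_add_adjacent_intervals hint₁ hint₂]
  calc _ ≤ _ := abs_add_le _ _
    _ ≤ _ := add_le_add hle₁ hle₂
    _ = _ := by ring

theorem L1_truncation_holder_general
    (α β H τ : ℝ) (y : ℝ → ℝ) (n : ℕ)
    (hα : 0 < α) (hαβ : α < β) (hβ : β ≤ 1) (hτ : 0 < τ) (hH : 0 ≤ H)
    (hn : 1 ≤ n)
    (hHolder : ∀ s ∈ Icc (0:ℝ) ((n : ℝ) * τ), ∀ t ∈ Icc (0:ℝ) ((n : ℝ) * τ),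
        |y t - y s| ≤ H * |t - s| ^ β) :
    |caputo α y ((n : ℝ) * τ) - caputo α (linInterp τ y) ((n : ℝ) * τ)|
      ≤ ((1 - (n : ℝ) ^ (-α)) / (2 ^ β * Real.Gamma (1 - α))
          + α / (Real.Gamma (1 - α) * (β - α) * (1 + β - α))
          + α * Real.Gamma (1 + β) / Real.Gamma (2 + β - α))
        * H * τ ^ (β - α) := by
  obtain ⟨hint, hle⟩ := linInterp_error_integral_estimate hα hαβ hβ hτ hH hn hHolder
  have hΓ : 0 < Gamma (1 - α) := Real.Gamma_pos_of_pos (by linarith)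
  rw [caputo_sub_caputo_of_eq (by simpa using linInterp_intCast_mul y hτ.ne' 0)
      (by simpa using linInterp_intCast_mul y hτ.ne' n)
      (intervalIntegrable_caputo_integrand hαβ (hα.trans hαβ) (by positivity) hHolder) hint,
    abs_mul, abs_of_pos (div_pos hα hΓ)]
  calc _ ≤ α / Gamma (1 - α) * (H * τ ^ (β - α) * ((1 - (n : ℝ) ^ (-α)) / (2 ^ β * α)
          + 1 / ((β - α) * (1 + β - α)) + Gamma (1 + β) * Gamma (1 - α) / Gamma (2 + β - α))) :=
        mul_le_mul_of_nonneg_left hle (div_pos hα hΓ).le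
    _ = _ := by
        have : (2:ℝ) ^ β ≠ 0 := by positivity
        field_simp

/-- L1 truncation error for β-Hölder functions, with explicit constant. -/
theorem L1_truncation_holder
    (T α β H τ : ℝ) (y : ℝ → ℝ) (n : ℕ)
    (hα : 0 < α) (hαβ : α < β) (hβ : β ≤ 1) (hτ : 0 < τ) (hH : 0 ≤ H)
    (hn : 1 ≤ n) (hT : (n : ℝ) * τ ≤ T)
    (hHolder : ∀ s ∈ Icc (0:ℝ) ((n : ℝ) * τ), ∀ t ∈ Icc (0:ℝ) ((n : ℝ) * τ),
        |y t - y s| ≤ H * |t - s| ^ β) :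
    |caputo α y ((n : ℝ) * τ) - caputo α (linInterp τ y) ((n : ℝ) * τ)|
      ≤ ((1 - (n : ℝ) ^ (-α)) / (2 ^ β * Real.Gamma (1 - α))
          + α / (Real.Gamma (1 - α) * (β - α) * (1 + β - α))
          + α * Real.Gamma (1 + β) / Real.Gamma (2 + β - α))
        * H * τ ^ (β - α) :=
  L1_truncation_holder_general α β H τ y n hα hαβ hβ hτ hH hn hHolder
end

section
/- If y is continuous on [0,T] and I_τ y is its piecewise linear interpolant on the uniform grid t_j = jτ, then the Caputo derivative of I_τ y at t_n = nτ equals the L1 formula: D^α(I_τ y)(t_n) = (τ^{-α}/Γ(2-α))·(y(t_n) − b_{n-1}·y(0) − ∑_{i=1}^{n-1}(b_{n-i-1} − b_{n-i})·y(t_i)), where b_i = (i+1)^{1-α} − i^{1-α}. -/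
open Real Set

/-!
On a cell `[jτ, (j+1)τ]` the interpolant `Y` is affine, so after the substitution `u = t - s` the
Caputo integrand is `(A + Q u) / u ^ (1 + α)` and integrates in closed form; on the last cell
`A = 0` because the numerator vanishes at `s = t`, so only the integrable `u ^ (-α)` survives.
Written as the difference of the boundary terms `(Y t - Y s) (t - s) ^ (-α)` plus
`Q ((t - jτ) ^ (1 - α) - (t - (j+1)τ) ^ (1 - α)) / (1 - α)`, the boundary terms telescope over
the cells and cancel the local term `(Y t - Y 0) / t ^ α`, which leaves the L1 sum
`τ ^ (-α) / Γ(2 - α) * ∑ b (n-1-j) (y ((j+1)τ) - y (jτ))`. Summation by parts turns it into the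
stated form.
-/

open MeasureTheory intervalIntegral

section PowerIntegrals

variable {α A Q c d : ℝ}

theorem affine_div_rpow_eqOn (hα : α ≠ 0) (hc : 0 ≤ c) (hA : A = 0 ∨ 0 < c) :
    EqOn (fun u => (A + Q * u) / u ^ (1 + α))
      (fun u => A * u ^ (-(1 + α)) + Q * u ^ (-α)) (Icc c d) := by
  intro u hu
  rcases (hc.trans hu.1).eq_or_lt with rfl | hu0
  · obtain rfl : A = 0 := hA.resolve_right fun h => (h.trans_le hu.1).false
    simp [zero_rpow (neg_ne_zero.mpr hα)]
  · simp only [rpow_neg hu0.le, rpow_add hu0, rpow_one]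
    field_simp

theorem intervalIntegrable_mul_rpow_neg_one_sub (hcd : c ≤ d) (hA : A = 0 ∨ 0 < c) :
    IntervalIntegrable (fun u => A * u ^ (-(1 + α))) volume c d := by
  rcases hA with rfl | hc
  · simp
  · exact (intervalIntegrable_rpow (Or.inr (notMem_uIcc_of_lt hc (hc.trans_le hcd)))).const_mul A

theorem intervalIntegrable_affine_div_rpow (hα0 : α ≠ 0) (hα1 : α < 1) (hc : 0 ≤ c) (hcd : c ≤ d)
    (hA : A = 0 ∨ 0 < c) :
    IntervalIntegrable (fun u => (A + Q * u) / u ^ (1 + α)) volume c d := by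
  refine IntervalIntegrable.congr ?_
    ((intervalIntegrable_mul_rpow_neg_one_sub (α := α) hcd hA).add
      ((intervalIntegrable_rpow' (neg_lt_neg hα1)).const_mul Q))
  rw [uIoc_of_le hcd]
  exact ((affine_div_rpow_eqOn hα0 hc hA).mono Ioc_subset_Icc_self).symm

theorem integral_affine_div_rpow (hα0 : α ≠ 0) (hα1 : α < 1) (hc : 0 ≤ c) (hcd : c ≤ d)
    (hA : A = 0 ∨ 0 < c) :
    ∫ u in c..d, (A + Q * u) / u ^ (1 + α)
      = A * (c ^ (-α) - d ^ (-α)) / α + Q * (d ^ (1 - α) - c ^ (1 - α)) / (1 - α) := by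
  have hA_part : ∫ u in c..d, A * u ^ (-(1 + α)) = A * (c ^ (-α) - d ^ (-α)) / α := by
    rcases hA with rfl | hc0
    · simp
    · rw [intervalIntegral.integral_const_mul, integral_rpow (Or.inr ⟨by simpa using hα0,
        notMem_uIcc_of_lt hc0 (hc0.trans_le hcd)⟩), show -(1 + α) + 1 = -α by ring]
      field_simp
      ring
  rw [integral_congr (by rw [uIcc_of_le hcd]; exact affine_div_rpow_eqOn hα0 hc hA),
    integral_add (intervalIntegrable_mul_rpow_neg_one_sub hcd hA)
      ((intervalIntegrable_rpow' (neg_lt_neg hα1)).const_mul Q),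
    hA_part, intervalIntegral.integral_const_mul, integral_rpow (Or.inl (neg_lt_neg hα1)),
    show -α + 1 = 1 - α by ring, ← mul_div_assoc]

theorem integral_div_sub_rpow_of_affine {g : ℝ → ℝ} {a b t : ℝ} (hα0 : α ≠ 0) (hα1 : α < 1)
    (hab : a ≤ b) (hbt : b ≤ t) (hg : ∀ s ∈ Icc a b, g s = g b + Q * (b - s))
    (hgt : b = t → g b = 0) :
    IntervalIntegrable (fun s => g s / (t - s) ^ (1 + α)) volume a b ∧
      α * ∫ s in a..b, g s / (t - s) ^ (1 + α)
        = g b * (t - b) ^ (-α) - g a * (t - a) ^ (-α)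
          + Q * ((t - a) ^ (1 - α) - (t - b) ^ (1 - α)) / (1 - α) := by
  set c := t - b
  set d := t - a
  set A := g b - Q * c
  have hc : 0 ≤ c := sub_nonneg.mpr hbt
  have hcd : c ≤ d := sub_le_sub_left hab t
  have h1α : 1 - α ≠ 0 := sub_ne_zero.mpr hα1.ne'
  have hA : A = 0 ∨ 0 < c := by
    rcases hbt.lt_or_eq with h | h
    · exact Or.inr (sub_pos.mpr h)
    · left
      simp only [A, c, h, sub_self, mul_zero, sub_zero]
      exact h ▸ hgt h
  have heq : EqOn (fun s => g s / (t - s) ^ (1 + α))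
      (fun s => (A + Q * (t - s)) / (t - s) ^ (1 + α)) (uIcc a b) := by
    intro s hs
    rw [uIcc_of_le hab] at hs
    simp only [hg s hs, A, c]
    ring_nf
  have hint := (intervalIntegrable_affine_div_rpow (Q := Q) hα0 hα1 hc hcd hA).comp_sub_left t
  simp only [c, d, sub_sub_cancel] at hint
  refine ⟨hint.symm.congr ((heq.mono uIoc_subset_uIcc).symm), ?_⟩
  rw [integral_congr heq, integral_comp_sub_left (fun u => (A + Q * u) / u ^ (1 + α)),
    integral_affine_div_rpow hα0 hα1 hc hcd hA, hg a ⟨le_rfl, hab⟩, rpow_neg hc,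
    rpow_neg (hc.trans hcd), rpow_one_sub' hc h1α, rpow_one_sub' (hc.trans hcd) h1α]
  simp only [A, c, d]
  field_simp
  ring

end PowerIntegrals

theorem linInterp_of_mem_Icc {τ : ℝ} (hτ : 0 < τ) (y : ℝ → ℝ) (j : ℕ) {s : ℝ}
    (hs : s ∈ Icc ((j : ℝ) * τ) ((j + 1) * τ)) :
    linInterp τ y s = y (j * τ) + (y ((j + 1) * τ) - y (j * τ)) / τ * (s - j * τ) := by
  rcases hs.2.lt_or_eq with hlt | rfl
  · have hfloor : ⌊s / τ⌋ = j := by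
      rw [Int.floor_eq_iff, le_div_iff₀ hτ, div_lt_iff₀ hτ]
      push_cast
      exact ⟨hs.1, hlt⟩
    rw [linInterp, hfloor]
    push_cast
    field_simp
    ring
  · have hfloor : ⌊((j : ℝ) + 1) * τ / τ⌋ = j + 1 := by
      rw [mul_div_cancel_right₀ _ hτ.ne']
      exact_mod_cast Int.floor_natCast (j + 1)
    rw [linInterp, hfloor]
    push_cast
    field_simp
    ring

theorem caputo_integral_linInterp_cell {α τ : ℝ} (hα : α ∈ Ioo (0 : ℝ) 1) (hτ : 0 < τ) (y : ℝ → ℝ)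
    (b : ℕ → ℝ) (hb : ∀ i : ℕ, b i = ((i : ℝ) + 1) ^ (1 - α) - (i : ℝ) ^ (1 - α))
    {n j : ℕ} (hj : j < n) :
    IntervalIntegrable
        (fun s => (linInterp τ y (n * τ) - linInterp τ y s) / (n * τ - s) ^ (1 + α))
        volume (j * τ) ((j + 1) * τ) ∧
      α * ∫ s in (j * τ)..((j + 1) * τ),
          (linInterp τ y (n * τ) - linInterp τ y s) / (n * τ - s) ^ (1 + α)
        = (linInterp τ y (n * τ) - linInterp τ y ((j + 1) * τ)) * (n * τ - (j + 1) * τ) ^ (-α)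
          - (linInterp τ y (n * τ) - linInterp τ y (j * τ)) * (n * τ - j * τ) ^ (-α)
          + τ ^ (-α) * b (n - 1 - j) * (y ((j + 1) * τ) - y (j * τ)) / (1 - α) := by
  have hjn : (j : ℝ) + 1 ≤ n := by exact_mod_cast hj
  have hab : (j : ℝ) * τ ≤ (j + 1) * τ := by nlinarith
  have hbt : ((j : ℝ) + 1) * τ ≤ n * τ := by nlinarith
  set Q := (y ((j + 1) * τ) - y (j * τ)) / τ
  have hg : ∀ s ∈ Icc ((j : ℝ) * τ) ((j + 1) * τ),
      linInterp τ y (n * τ) - linInterp τ y s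
        = linInterp τ y (n * τ) - linInterp τ y ((j + 1) * τ) + Q * ((j + 1) * τ - s) := by
    intro s hs
    rw [linInterp_of_mem_Icc hτ y j hs,
      linInterp_of_mem_Icc hτ y j ⟨hab, le_rfl⟩]
    ring
  obtain ⟨hint, hval⟩ := integral_div_sub_rpow_of_affine hα.1.ne' hα.2 hab hbt hg
    (fun h => by rw [h, sub_self])
  refine ⟨hint, hval.trans ?_⟩
  congr 1
  set k : ℕ := n - 1 - j
  have hk : (n : ℝ) * τ - (j + 1) * τ = k * τ := by
    rw [Nat.cast_sub (by omega), Nat.cast_sub (by omega)]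
    ring
  have h1α : 1 - α ≠ 0 := sub_ne_zero.mpr hα.2.ne'
  rw [show (n : ℝ) * τ - j * τ = (k + 1) * τ by linarith, hk, hb k,
    mul_rpow (by positivity) hτ.le, mul_rpow (by positivity) hτ.le, rpow_one_sub' hτ.le h1α,
    rpow_neg hτ.le]
  simp only [Q]
  field_simp

theorem sum_range_mul_sub_eq_by_parts {R : Type*} [CommRing R] (b z : ℕ → R) (n : ℕ) :
    ∑ j ∈ Finset.range n, b (n - 1 - j) * (z (j + 1) - z j)
      = b 0 * z n - b (n - 1) * z 0
        - ∑ i ∈ Finset.Icc 1 (n - 1), (b (n - i - 1) - b (n - i)) * z i := by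
  rcases n with _ | m
  · simp
  have hIcc : ∑ i ∈ Finset.Icc 1 m, (b (m + 1 - i - 1) - b (m + 1 - i)) * z i
      = ∑ j ∈ Finset.range m, (b (m - (j + 1)) - b (m - j)) * z (j + 1) := by
    rw [← Finset.Ico_add_one_right_eq_Icc, Finset.sum_Ico_eq_sum_range]
    refine Finset.sum_congr (by simp) fun j _ => ?_
    rw [add_comm 1 j, show m + 1 - (j + 1) - 1 = m - (j + 1) by omega,
      show m + 1 - (j + 1) = m - j by omega]
  rw [Nat.add_sub_cancel, hIcc]
  simp only [mul_sub, sub_mul, Finset.sum_sub_distrib]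
  rw [Finset.sum_range_succ, Finset.sum_range_succ' (fun j => b (m - j) * z j)]
  simp only [Nat.sub_self, Nat.sub_zero]
  ring

theorem caputo_interp_eq_L1_general
    (α τ : ℝ) (y : ℝ → ℝ) (n : ℕ) (b : ℕ → ℝ)
    (hα : α ∈ Ioo (0:ℝ) 1) (hτ : 0 < τ)
    (hb : ∀ i : ℕ, b i = ((i : ℝ) + 1) ^ (1 - α) - (i : ℝ) ^ (1 - α)) :
    caputo α (linInterp τ y) ((n : ℝ) * τ)
      = τ ^ (-α) / Real.Gamma (2 - α)
        * (y ((n : ℝ) * τ) - b (n - 1) * y 0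
            - ∑ i ∈ Finset.Icc 1 (n - 1), (b (n - i - 1) - b (n - i)) * y ((i : ℝ) * τ)) := by
  set Y := linInterp τ y
  set t := (n : ℝ) * τ
  set F : ℝ → ℝ := fun s => (Y t - Y s) * (t - s) ^ (-α)
  have hpiece := fun j (hj : j < n) => caputo_integral_linInterp_cell hα hτ y b hb hj
  have hsplit : ∫ s in (0 : ℝ)..t, (Y t - Y s) / (t - s) ^ (1 + α)
      = ∑ j ∈ Finset.range n, ∫ s in (j * τ)..((j + 1) * τ), (Y t - Y s) / (t - s) ^ (1 + α) := by
    simpa using (sum_integral_adjacent_intervals (a := fun j : ℕ => (j : ℝ) * τ)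
      fun j hj => by simpa using (hpiece j hj).1).symm
  have htelescope : ∑ j ∈ Finset.range n, (F ((j + 1) * τ) - F (j * τ)) = -F 0 := by
    simpa [F, t] using Finset.sum_range_sub (fun j : ℕ => F (j * τ)) n
  have h1α : 1 - α ≠ 0 := sub_ne_zero.mpr hα.2.ne'
  have hΓ : Gamma (2 - α) = (1 - α) * Gamma (1 - α) := by
    rw [show 2 - α = 1 - α + 1 by ring, Gamma_add_one h1α]
  have hb0 : b 0 = 1 := by simp [hb, zero_rpow h1α]
  calc caputo α Y t
      = (F 0 + ∑ j ∈ Finset.range n, α * ∫ s in (j * τ)..((j + 1) * τ),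
          (Y t - Y s) / (t - s) ^ (1 + α)) / Gamma (1 - α) := by
        rw [caputo, hsplit, ← Finset.mul_sum]
        simp only [F, sub_zero, rpow_neg (by positivity : (0 : ℝ) ≤ t)]
        ring
    _ = τ ^ (-α) / Gamma (2 - α)
          * ∑ j ∈ Finset.range n, b (n - 1 - j) * (y ((j + 1 : ℕ) * τ) - y (j * τ)) := by
        rw [Finset.sum_congr rfl fun j hj => (hpiece j (Finset.mem_range.1 hj)).2,
          Finset.sum_add_distrib, htelescope, add_neg_cancel_left, Finset.sum_div, hΓ,
          Finset.mul_sum]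
        push_cast
        exact Finset.sum_congr rfl fun _ _ => by rw [div_div]; ring
    _ = _ := by
        rw [sum_range_mul_sub_eq_by_parts b (fun i : ℕ => y (i * τ)), hb0]
        simp [t]

/-- the Caputo derivative of the piecewise linear interpolant at a
grid point equals the L1 formula. -/
theorem caputo_interp_eq_L1
    (T α τ : ℝ) (y : ℝ → ℝ) (n : ℕ) (b : ℕ → ℝ)
    (hα : α ∈ Ioo (0:ℝ) 1) (hτ : 0 < τ) (hn : 1 ≤ n) (hT : (n : ℝ) * τ ≤ T)
    (hy : ContinuousOn y (Icc 0 T))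
    (hb : ∀ i : ℕ, b i = ((i : ℝ) + 1) ^ (1 - α) - (i : ℝ) ^ (1 - α)) :
    caputo α (linInterp τ y) ((n : ℝ) * τ)
      = τ ^ (-α) / Real.Gamma (2 - α)
        * (y ((n : ℝ) * τ) - b (n - 1) * y 0
            - ∑ i ∈ Finset.Icc 1 (n - 1), (b (n - i - 1) - b (n - i)) * y ((i : ℝ) * τ)) :=
  caputo_interp_eq_L1_general α τ y n b hα hτ hb
end

section
/- The function y(t) = (1-t)^β on [0,1] belongs to C^{0,β}[0,1] for β ∈ (0,1), but its Caputo derivative of order β at t = 1, namely D^β y(1) = (β/Γ(1-β))·∫₀¹ (y(1)-y(s))/(1-s)^{1+β} ds + (1/Γ(1-β))·(y(1)-y(0)), fails to exist because the integral ∫₀¹ (1-s)^{β}·(1-s)^{-1-β} ds = ∫₀¹ (1-s)^{-1} ds diverges. -/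
open Real Set MeasureTheory

/-! The Hölder bound is the subadditivity `(u + v) ^ β ≤ u ^ β + v ^ β` of the concave power,
applied to `u = |t - s|`. At `t = 1` the Caputo integrand `(y 1 - y s) / (1 - s) ^ (1 + β)`
collapses to `-(1 - s)⁻¹`, whose logarithmic singularity at `s = 1` is not integrable. -/

namespace Real

variable {a b p : ℝ}

lemma rpow_sub_rpow_le_rpow_sub (hb : 0 ≤ b) (hba : b ≤ a) (hp : 0 ≤ p) (hp1 : p ≤ 1) :
    a ^ p - b ^ p ≤ (a - b) ^ p := by
  have h := rpow_add_le_add_rpow (sub_nonneg.2 hba) hb hp hp1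
  rw [sub_add_cancel] at h
  linarith

lemma abs_rpow_sub_rpow_le (ha : 0 ≤ a) (hb : 0 ≤ b) (hp : 0 ≤ p) (hp1 : p ≤ 1) :
    |a ^ p - b ^ p| ≤ |a - b| ^ p := by
  wlog hba : b ≤ a generalizing a b
  · rw [abs_sub_comm, abs_sub_comm a]
    exact this hb ha (le_of_not_ge hba)
  rw [abs_of_nonneg (sub_nonneg.2 (rpow_le_rpow hb hba hp)), abs_of_nonneg (sub_nonneg.2 hba)]
  exact rpow_sub_rpow_le_rpow_sub hb hba hp hp1

lemma rpow_div_rpow_one_add (ha : 0 < a) : a ^ p / a ^ (1 + p) = a⁻¹ := by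
  rw [← rpow_sub ha, show p - (1 + p) = -1 by ring, rpow_neg_one]

end Real

theorem intervalIntegrable_sub_inv_iff' {a b c : ℝ} :
    IntervalIntegrable (fun x => (c - x)⁻¹) volume a b ↔ a = b ∨ c ∉ uIcc a b := by
  rw [← intervalIntegrable_sub_inv_iff]
  refine ⟨fun h => ?_, fun h => ?_⟩ <;>
    simpa only [Pi.neg_def, ← inv_neg, neg_sub] using h.neg

/-- `y(t) = (1-t)^β` is β-Hölder on `[0,1]`, yet the integral defining its
Caputo derivative of order β at `t = 1` diverges. -/
theorem holder_function_without_caputo (β : ℝ) (hβ : β ∈ Ioo (0:ℝ) 1) :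
    (∀ s ∈ Icc (0:ℝ) 1, ∀ t ∈ Icc (0:ℝ) 1,
        |(1 - t) ^ β - (1 - s) ^ β| ≤ |t - s| ^ β) ∧
    ¬ IntervalIntegrable
        (fun s : ℝ => ((1 - (1:ℝ)) ^ β - (1 - s) ^ β) / (1 - s) ^ (1 + β))
        volume 0 1 ∧
    ¬ IntervalIntegrable (fun s : ℝ => (1 - s)⁻¹) volume 0 1 := by
  obtain ⟨hβ0, hβ1⟩ := hβ
  have hinv : ¬ IntervalIntegrable (fun s : ℝ => (1 - s)⁻¹) volume 0 1 := by
    rw [intervalIntegrable_sub_inv_iff']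
    simp
  refine ⟨fun s hs t ht => ?_, fun h => ?_, hinv⟩
  · simpa only [sub_sub_sub_cancel_left, abs_sub_comm s t] using
      abs_rpow_sub_rpow_le (sub_nonneg.2 ht.2) (sub_nonneg.2 hs.2) hβ0.le hβ1.le
  · have hcaputo : EqOn (fun s : ℝ => ((1 - (1:ℝ)) ^ β - (1 - s) ^ β) / (1 - s) ^ (1 + β))
        (fun s => -(1 - s)⁻¹) (uIoo 0 1) := fun s hs => by
      rw [uIoo_of_le zero_le_one] at hs
      dsimp only
      rw [sub_self, zero_rpow hβ0.ne', zero_sub, neg_div,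
        rpow_div_rpow_one_add (sub_pos.2 hs.2)]
    exact hinv (by simpa only [Pi.neg_def, neg_neg] using (h.congr_uIoo hcaputo).neg)
end

section
/- For 0 < α < β ≤ 1 and a uniform grid t_j = jτ with t_n = nτ, the singular term K_{n-1} = ∫_{t_{n-1}}^{t_n} (t_n-s)^{-1-α}·((s-t_{n-1})(t_n-s)^β + (t_n-s)(s-t_{n-1})^β) ds satisfies K_{n-1} ≤ τ^{1+β-α}·(1/((β-α)(1+β-α)) + Γ(1+β)Γ(1-α)/Γ(2+β-α)). -/
/-!
Substituting `s = t_{n-1} + τ y` and using that the integrand is homogeneous of degree `β - α`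
in `(t_n - s, s - t_{n-1})` gives `K_{n-1} = τ^{1+β-α} ∫₀¹ (y (1-y)^{β-1-α} + (1-y)^{-α} y^β) dy`.
The two pieces are the Beta integrals `B(β - α, 2) = 1 / ((β - α)(1 + β - α))` and
`B(1 + β, 1 - α)`, so the bound holds with equality.
-/

open Real Set MeasureTheory intervalIntegral

namespace Real

variable {u v : ℝ}

lemma ofReal_rpow_mul_one_sub_rpow {x : ℝ} (hx₀ : 0 ≤ x) (hx₁ : x ≤ 1) :
    ((x ^ (u - 1) * (1 - x) ^ (v - 1) : ℝ) : ℂ)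
      = (x : ℂ) ^ ((u : ℂ) - 1) * (1 - (x : ℂ)) ^ ((v : ℂ) - 1) := by
  push_cast [Complex.ofReal_cpow hx₀, Complex.ofReal_cpow (sub_nonneg.2 hx₁)]
  rfl

theorem intervalIntegrable_rpow_mul_one_sub_rpow (hu : 0 < u) (hv : 0 < v) :
    IntervalIntegrable (fun x : ℝ ↦ x ^ (u - 1) * (1 - x) ^ (v - 1)) volume 0 1 := by
  refine (Complex.betaIntegral_convergent (u := u) (v := v) (by simpa) (by simpa)).norm.congr_uIoo
    fun x hx ↦ ?_
  rw [uIoo_of_le zero_le_one] at hx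
  beta_reduce
  rw [← ofReal_rpow_mul_one_sub_rpow hx.1.le hx.2.le, Complex.norm_real, Real.norm_of_nonneg]
  exact mul_nonneg (rpow_nonneg hx.1.le _) (rpow_nonneg (sub_nonneg.2 hx.2.le) _)

theorem integral_rpow_mul_one_sub_rpow (hu : 0 < u) (hv : 0 < v) :
    ∫ x in (0 : ℝ)..1, x ^ (u - 1) * (1 - x) ^ (v - 1) = Gamma u * Gamma v / Gamma (u + v) := by
  have h := Complex.betaIntegral_eq_Gamma_mul_div u v (by simpa) (by simpa)
  have hcast : EqOn (fun x : ℝ ↦ ((x ^ (u - 1) * (1 - x) ^ (v - 1) : ℝ) : ℂ))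
      (fun x : ℝ ↦ (x : ℂ) ^ ((u : ℂ) - 1) * (1 - (x : ℂ)) ^ ((v : ℂ) - 1)) (uIcc 0 1) :=
    fun x hx ↦ by
      rw [uIcc_of_le zero_le_one] at hx
      exact ofReal_rpow_mul_one_sub_rpow hx.1 hx.2
  rw [Complex.betaIntegral, ← integral_congr hcast, intervalIntegral.integral_ofReal,
    ← Complex.ofReal_add, Complex.Gamma_ofReal, Complex.Gamma_ofReal, Complex.Gamma_ofReal] at h
  exact_mod_cast h

theorem Gamma_mul_Gamma_two_div {c : ℝ} (hc : 0 < c) :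
    Gamma c * Gamma 2 / Gamma (c + 2) = 1 / (c * (c + 1)) := by
  have hΓ : Gamma (c + 2) = (c + 1) * c * Gamma c := by
    rw [show c + 2 = c + 1 + 1 by ring, Gamma_add_one (by positivity), Gamma_add_one hc.ne',
      mul_assoc]
  have hΓc : Gamma c ≠ 0 := (Gamma_pos_of_pos hc).ne'
  rw [Gamma_two, hΓ]
  field_simp

end Real

/-- With `x = t_n - s` and `y = s - t_{n-1}`, this is the integrand of `K_{n-1}`. -/
noncomputable def singularKernel (α β x y : ℝ) : ℝ :=
  x ^ (-1 - α) * (y * x ^ β + x * y ^ β)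

section singularKernel

variable {α β : ℝ}

lemma singularKernel_mul {τ x y : ℝ} (hτ : 0 < τ) (hx : 0 ≤ x) (hy : 0 ≤ y) :
    singularKernel α β (τ * x) (τ * y) = τ ^ (β - α) * singularKernel α β x y := by
  have hpow : τ ^ (-1 - α) * τ ^ β * τ = τ ^ (β - α) := by
    rw [← rpow_add hτ, ← rpow_add_one hτ.ne']
    ring_nf
  simp only [singularKernel, mul_rpow hτ.le hx, mul_rpow hτ.le hy]
  linear_combination x ^ (-1 - α) * (y * x ^ β + x * y ^ β) * hpow

lemma singularKernel_of_pos {x : ℝ} (y : ℝ) (hx : 0 < x) :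
    singularKernel α β x y = y * x ^ (β - 1 - α) + x ^ (-α) * y ^ β := by
  have h₁ : x ^ (-1 - α) * x ^ β = x ^ (β - 1 - α) := by
    rw [← rpow_add hx]; ring_nf
  have h₂ : x ^ (-1 - α) * x = x ^ (-α) := by
    rw [← rpow_add_one hx.ne']; ring_nf
  simp only [singularKernel]
  linear_combination y * h₁ + y ^ β * h₂

theorem integral_singularKernel_eq_rpow_mul {τ : ℝ} (hτ : 0 < τ) (a : ℝ) :
    ∫ s in a..a + τ, singularKernel α β (a + τ - s) (s - a)
      = τ ^ (1 + β - α) * ∫ y in (0 : ℝ)..1, singularKernel α β (1 - y) y := by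
  have hsub := smul_integral_comp_mul_add (a := 0) (b := 1)
    (fun s ↦ singularKernel α β (a + τ - s) (s - a)) τ a
  rw [mul_zero, zero_add, mul_one, add_comm τ a] at hsub
  have hscale : EqOn (fun y ↦ singularKernel α β (a + τ - (τ * y + a)) (τ * y + a - a))
      (fun y ↦ τ ^ (β - α) * singularKernel α β (1 - y) y) (uIcc 0 1) := fun y hy ↦ by
    rw [uIcc_of_le zero_le_one] at hy
    beta_reduce
    rw [← singularKernel_mul hτ (sub_nonneg.2 hy.2) hy.1]
    ring_nf
  rw [← hsub, integral_congr hscale, intervalIntegral.integral_const_mul, smul_eq_mul, ← mul_assoc,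
    show 1 + β - α = 1 + (β - α) by ring, rpow_add hτ, rpow_one]

theorem integral_singularKernel_one_sub (hαβ : α < β) (hα : α < 1) (hβ : -1 < β) :
    ∫ y in (0 : ℝ)..1, singularKernel α β (1 - y) y
      = 1 / ((β - α) * (1 + β - α))
        + Gamma (1 + β) * Gamma (1 - α) / Gamma (2 + β - α) := by
  have hreflect : ∫ y in (0 : ℝ)..1, singularKernel α β (1 - y) y
      = ∫ x in (0 : ℝ)..1, singularKernel α β x (1 - x) := by
    simpa using integral_comp_sub_left (fun x ↦ singularKernel α β x (1 - x)) 1 (a := 0) (b := 1)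
  have hbeta : ∀ᵐ x, x ∈ uIoc (0 : ℝ) 1 → singularKernel α β x (1 - x)
      = x ^ ((β - α) - 1) * (1 - x) ^ ((2 : ℝ) - 1)
        + x ^ ((1 - α) - 1) * (1 - x) ^ ((1 + β) - 1) := by
    refine Filter.Eventually.of_forall fun x hx ↦ ?_
    rw [uIoc_of_le zero_le_one] at hx
    rw [singularKernel_of_pos _ hx.1, show (β - α) - 1 = β - 1 - α by ring,
      show (1 - α) - 1 = -α by ring, add_sub_cancel_left, show (2 : ℝ) - 1 = 1 by norm_num,
      rpow_one, mul_comm (1 - x)]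
  have hβα : 0 < β - α := sub_pos.2 hαβ
  have h1α : 0 < 1 - α := sub_pos.2 hα
  have h1β : 0 < 1 + β := by linarith
  rw [hreflect, integral_congr_ae hbeta,
    integral_add (intervalIntegrable_rpow_mul_one_sub_rpow hβα two_pos)
      (intervalIntegrable_rpow_mul_one_sub_rpow h1α h1β),
    integral_rpow_mul_one_sub_rpow hβα two_pos, integral_rpow_mul_one_sub_rpow h1α h1β,
    Gamma_mul_Gamma_two_div hβα, show 1 - α + (1 + β) = 2 + β - α by ring,
    show β - α + 1 = 1 + β - α by ring, mul_comm (Gamma (1 - α))]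

end singularKernel

theorem singular_term_bound_general (α β τ : ℝ) (n : ℕ)
    (hα : 0 < α) (hαβ : α < β) (hβ : β ≤ 1) (hτ : 0 < τ) :
    (∫ s in (((n : ℝ) - 1) * τ)..((n : ℝ) * τ),
        ((n : ℝ) * τ - s) ^ (-1 - α)
          * ((s - ((n : ℝ) - 1) * τ) * ((n : ℝ) * τ - s) ^ β
            + ((n : ℝ) * τ - s) * (s - ((n : ℝ) - 1) * τ) ^ β))
      ≤ τ ^ (1 + β - α)
        * (1 / ((β - α) * (1 + β - α))
          + Real.Gamma (1 + β) * Real.Gamma (1 - α) / Real.Gamma (2 + β - α)) := by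
  rw [show (n : ℝ) * τ = ((n : ℝ) - 1) * τ + τ by ring,
    ← integral_singularKernel_one_sub hαβ (by linarith) (by linarith)]
  exact (integral_singularKernel_eq_rpow_mul hτ _).le

/-- the singular term K_{n-1} of the L1 error estimate. -/
theorem singular_term_bound (α β τ : ℝ) (n : ℕ)
    (hα : 0 < α) (hαβ : α < β) (hβ : β ≤ 1) (hτ : 0 < τ) (hn : 1 ≤ n) :
    (∫ s in (((n : ℝ) - 1) * τ)..((n : ℝ) * τ),
        ((n : ℝ) * τ - s) ^ (-1 - α)
          * ((s - ((n : ℝ) - 1) * τ) * ((n : ℝ) * τ - s) ^ β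
            + ((n : ℝ) * τ - s) * (s - ((n : ℝ) - 1) * τ) ^ β))
      ≤ τ ^ (1 + β - α)
        * (1 / ((β - α) * (1 + β - α))
          + Real.Gamma (1 + β) * Real.Gamma (1 - α) / Real.Gamma (2 + β - α)) :=
  singular_term_bound_general α β τ n hα hαβ hβ hτ
end
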